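/- arXiv:2310.07230 — 10 statements merged into one kernel-verified Lean document; each statement's English description precedes it below -/
import Mathlib

section
/- Let A be a real 2×2 matrix and b = (b₁, b₂) ∈ ℝ² with b₁ < 0, b₂ = 0 and A₂₁ < 0. Then there exists an invertible real 2×2 matrix M such that M·A·M⁻¹ = [[0, det A], [−1, tr A]] and M·b = (−1, 0)ᵀ; i.e., the affine planar vector field z ↦ Az + b is linearly conjugate to the Liénard normal form Z⁻(x,y) = (−1 + det(A)·y, −x + tr(A)·y). -/
open Matrix

/-- Proposition 2.1 (PWL normal form): an affine planar vector field `z ↦ A z + b`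
with `b 0 < 0`, `b 1 = 0` and `A 1 0 < 0` is linearly conjugate to the Liénard
normal form with matrix `!![0, det A; -1, tr A]` and translation `![-1, 0]`. -/
theorem pwl_VI3_lienard_normal_form (A : Matrix (Fin 2) (Fin 2) ℝ) (b : Fin 2 → ℝ)
    (hb1 : b 0 < 0) (hb2 : b 1 = 0) (hA21 : A 1 0 < 0) :
    ∃ M : Matrix (Fin 2) (Fin 2) ℝ, IsUnit M.det ∧
      M * A * M⁻¹ = !![0, A.det; -1, A.trace] ∧
      M.mulVec b = ![-1, 0] := by
  have hb : b 0 ≠ 0 := ne_of_lt hb1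
  have hA : A 1 0 ≠ 0 := ne_of_lt hA21
  set c : ℝ := 1 / (b 0 * A 1 0) with hc
  refine ⟨!![-1 / b 0, A 0 0 * c; 0, c], ?_, ?_, ?_⟩
  · have hdet : (!![-1 / b 0, A 0 0 * c; 0, c] : Matrix (Fin 2) (Fin 2) ℝ).det
        = -1 / b 0 * c := by simp [Matrix.det_fin_two]
    rw [hdet]
    apply IsUnit.mul <;> simp [hc, hb, hA, sub_eq_zero] <;> positivity
  · have hMA : !![-1 / b 0, A 0 0 * c; 0, c] * A
        = !![0, A.det; -1, A.trace] * !![-1 / b 0, A 0 0 * c; 0, c] := by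
      rw [Matrix.eta_fin_two A]
      ext i j
      fin_cases i <;> fin_cases j <;>
        simp [Matrix.mul_apply, Fin.sum_univ_two, Matrix.det_fin_two, Matrix.trace_fin_two, hc] <;>
        field_simp <;> ring
    have hu : IsUnit (!![-1 / b 0, A 0 0 * c; 0, c] : Matrix (Fin 2) (Fin 2) ℝ).det := by
      have hdet : (!![-1 / b 0, A 0 0 * c; 0, c] : Matrix (Fin 2) (Fin 2) ℝ).det
          = -1 / b 0 * c := by simp [Matrix.det_fin_two]
      rw [hdet]
      apply IsUnit.mul <;> simp [hc, hb, hA, sub_eq_zero] <;> positivity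
    rw [hMA, Matrix.mul_assoc, Matrix.mul_nonsing_inv _ hu, Matrix.mul_one]
  · ext i
    fin_cases i <;>
      simp [Matrix.mulVec, dotProduct, Fin.sum_univ_two, hb2, hb, hc] <;> field_simp
end

section
/- Let β, γ ∈ ℝ with β ≠ 0 and γ² − 4β ≥ 0, and let κ be any root of λ² − γλ + β = 0 (necessarily κ ≠ 0). Then the affine line {(x,y) : x = κy + 1/κ} is invariant under the vector field Z⁻(x,y) = (−1 + βy, −x + γy): for every (x,y) with x = κy + 1/κ one has (−1 + βy) = κ·(−x + γy). Moreover, this line intersects the x-axis at x = 1/κ, which is a zero of V, i.e. V(1/κ) = 0. -/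
/-- Lemma 2.1.2: if `β ≠ 0`, `γ² − 4β ≥ 0` and `κ` is a root of `λ² − γλ + β`, then
`κ ≠ 0`, the line `x = κy + 1/κ` is invariant under `Z⁻(x,y) = (−1 + βy, −x + γy)`,
and its intersection `x = 1/κ` with the `x`-axis is a zero of `V(x) = βx² − γx + 1`. -/
theorem invariant_eigenline (β γ κ : ℝ) (hβ : β ≠ 0) (hdisc : γ ^ 2 - 4 * β ≥ 0)
    (hκ : κ ^ 2 - γ * κ + β = 0) :
    κ ≠ 0 ∧
    (∀ x y : ℝ, x = κ * y + 1 / κ → -1 + β * y = κ * (-x + γ * y)) ∧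
    β * (1 / κ) ^ 2 - γ * (1 / κ) + 1 = 0 := by
  have hκ0 : κ ≠ 0 := by
    intro h; apply hβ; simpa [h] using hκ
  refine ⟨hκ0, ?_, ?_⟩
  · intro x y hxy
    subst hxy
    have hβeq : β = γ * κ - κ ^ 2 := by linarith
    rw [hβeq]
    field_simp
    ring
  · have : β * (1/κ)^2 - γ * (1/κ) + 1 = (κ^2 - γ*κ + β) / κ^2 := by
      field_simp; ring
    rw [this, hκ]; simp
end

section
/- Let β, γ ∈ ℝ, b > 0, and let Π : [0,b) → ℝ be a Poincaré half-map datum. Then for every x ∈ (0,b): Π'(x) = x·V(Π(x)) / (Π(x)·V(x)); in particular Π'(x) < 0 for all x ∈ (0,b). -/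
/-- `V(x) = βx² − γx + 1`. -/
def Vq (β γ x : ℝ) : ℝ := β * x ^ 2 - γ * x + 1

lemma Vq_continuous (β γ : ℝ) : Continuous (Vq β γ) := by
  unfold Vq; continuity

/-- Equation (2.16): for a Poincaré half-map datum `P` on `[0,b)` (differentiable,
`P 0 = 0`, `P x < 0`, `V > 0` on `[P x, x]` and `∫_{P x}^{x} u/V(u) du = 0`), one has
`P'(x) = x V(P(x)) / (P(x) V(x)) < 0` on `(0,b)`. -/
theorem poincare_halfmap_derivative (β γ b : ℝ) (hb : 0 < b) (P : ℝ → ℝ)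
    (hdiff : DifferentiableOn ℝ P (Set.Ico 0 b))
    (hP0 : P 0 = 0)
    (hPneg : ∀ x ∈ Set.Ioo 0 b, P x < 0)
    (hV : ∀ x ∈ Set.Ioo 0 b, ∀ u ∈ Set.Icc (P x) x, Vq β γ u > 0)
    (hint : ∀ x ∈ Set.Ioo 0 b, ∫ u in (P x)..x, u / Vq β γ u = 0) :
    ∀ x ∈ Set.Ioo 0 b,
      deriv P x = x * Vq β γ (P x) / (P x * Vq β γ x) ∧ deriv P x < 0 := by
  intro x₀ hx₀
  obtain ⟨hx₀0, hx₀b⟩ := hx₀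
  set f : ℝ → ℝ := fun u => u / Vq β γ u with hf
  have hPx₀ : P x₀ < 0 := hPneg x₀ ⟨hx₀0, hx₀b⟩
  set a₀ : ℝ := P x₀ with ha₀
  have ha₀x₀ : a₀ < x₀ := lt_trans hPx₀ hx₀0
  -- differentiability of P at x₀
  have hPdiff : DifferentiableAt ℝ P x₀ := by
    have : Set.Ico 0 b ∈ nhds x₀ :=
      Filter.mem_of_superset (isOpen_Ioo.mem_nhds ⟨hx₀0, hx₀b⟩) Set.Ioo_subset_Ico_self
    exact (hdiff x₀ ⟨le_of_lt hx₀0, hx₀b⟩).differentiableAt this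
  -- The open set where V > 0
  have hSopen : IsOpen {u : ℝ | 0 < Vq β γ u} :=
    isOpen_lt continuous_const (Vq_continuous β γ)
  have hIccS : Set.Icc a₀ x₀ ⊆ {u : ℝ | 0 < Vq β γ u} := fun u hu =>
    hV x₀ ⟨hx₀0, hx₀b⟩ u hu
  obtain ⟨δ, hδ, hthick⟩ :=
    (isCompact_Icc).exists_thickening_subset_open hSopen hIccS
  set J : Set ℝ := Set.Ioo (a₀ - δ) (x₀ + δ) with hJ
  have hJS : J ⊆ {u : ℝ | 0 < Vq β γ u} := by
    intro u hu
    apply hthick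
    rw [Metric.mem_thickening_iff]
    refine ⟨max a₀ (min u x₀), ?_, ?_⟩
    · constructor
      · exact le_max_left _ _
      · exact max_le (le_of_lt ha₀x₀) (min_le_right _ _)
    · rcases le_total u a₀ with h | h
      · have : min u x₀ = u := min_eq_left (le_trans h ha₀x₀.le)
        rw [this, max_eq_left h]
        rw [Real.dist_eq, abs_sub_lt_iff]
        constructor <;> linarith [hu.1]
      · rcases le_total u x₀ with h2 | h2
        · rw [min_eq_left h2, max_eq_right h, dist_self]; exact hδ
        · rw [min_eq_right h2, max_eq_right (le_of_lt ha₀x₀)]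
          rw [Real.dist_eq, abs_sub_lt_iff]
          constructor <;> linarith [hu.2]
  have hJopen : IsOpen J := isOpen_Ioo
  have hx₀J : x₀ ∈ J := ⟨by linarith, by linarith⟩
  have ha₀J : a₀ ∈ J := ⟨by linarith, by linarith⟩
  -- f is continuous on J
  have hfc : ∀ u ∈ J, ContinuousAt f u := by
    intro u hu
    exact ContinuousAt.div continuousAt_id (Vq_continuous β γ).continuousAt
      (ne_of_gt (hJS hu))
  have hfcJ : ContinuousOn f J := fun u hu => (hfc u hu).continuousWithinAt
  -- interval integrability within J
  have hInt : ∀ p ∈ J, ∀ q ∈ J, IntervalIntegrable f MeasureTheory.volume p q := by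
    intro p hp q hq
    apply ContinuousOn.intervalIntegrable
    exact hfcJ.mono (Set.ordConnected_Ioo.uIcc_subset hp hq)
  have hmeas : ∀ u ∈ J, StronglyMeasurableAtFilter f (nhds u) MeasureTheory.volume :=
    ContinuousOn.stronglyMeasurableAtFilter hJopen hfcJ
  -- G, the antiderivative
  set G : ℝ → ℝ := fun y => ∫ u in a₀..y, f u with hG
  have hGx₀ : HasDerivAt G (f x₀) x₀ :=
    intervalIntegral.integral_hasDerivAt_right (hInt a₀ ha₀J x₀ hx₀J)
      (hmeas x₀ hx₀J) (hfc x₀ hx₀J)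
  have hGa₀ : HasDerivAt G (f a₀) a₀ :=
    intervalIntegral.integral_hasDerivAt_right (hInt a₀ ha₀J a₀ ha₀J)
      (hmeas a₀ ha₀J) (hfc a₀ ha₀J)
  have hPd : HasDerivAt P (deriv P x₀) x₀ := hPdiff.hasDerivAt
  have hcomp : HasDerivAt (fun x => G (P x)) (f a₀ * deriv P x₀) x₀ :=
    HasDerivAt.comp x₀ hGa₀ hPd
  have hH : HasDerivAt (fun x => G x - G (P x)) (f x₀ - f a₀ * deriv P x₀) x₀ :=
    hGx₀.sub hcomp
  -- the function G x - G (P x) is eventually 0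
  have hev : (fun x => G x - G (P x)) =ᶠ[nhds x₀] (fun _ => (0 : ℝ)) := by
    have h1 : Set.Ioo 0 b ∈ nhds x₀ := isOpen_Ioo.mem_nhds ⟨hx₀0, hx₀b⟩
    have h2 : J ∈ nhds x₀ := hJopen.mem_nhds hx₀J
    have h3 : P ⁻¹' J ∈ nhds x₀ := hPdiff.continuousAt (hJopen.mem_nhds ha₀J)
    filter_upwards [h1, h2, h3] with x hx1 hx2 hx3
    have hadd : (∫ u in a₀..(P x), f u) + (∫ u in (P x)..x, f u) = ∫ u in a₀..x, f u :=
      intervalIntegral.integral_add_adjacent_intervals (hInt a₀ ha₀J _ hx3)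
        (hInt _ hx3 x hx2)
    have h0 : (∫ u in (P x)..x, f u) = 0 := hint x hx1
    simp only [hG]
    rw [← hadd, h0]; ring
  have hzero : f x₀ - f a₀ * deriv P x₀ = 0 := by
    have : HasDerivAt (fun _ : ℝ => (0 : ℝ)) (f x₀ - f a₀ * deriv P x₀) x₀ :=
      (Filter.EventuallyEq.hasDerivAt_iff hev).mp hH
    exact this.unique (hasDerivAt_const x₀ 0)
  have hVx₀ : 0 < Vq β γ x₀ := hJS hx₀J
  have hVa₀ : 0 < Vq β γ a₀ := hJS ha₀J
  have hfa₀ : f a₀ ≠ 0 := by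
    simp only [hf]
    exact div_ne_zero (ne_of_lt hPx₀) (ne_of_gt hVa₀)
  have hderiv : deriv P x₀ = x₀ * Vq β γ (P x₀) / (P x₀ * Vq β γ x₀) := by
    simp only [hf, ← ha₀] at hzero ⊢
    have h1 : a₀ / Vq β γ a₀ * deriv P x₀ = x₀ / Vq β γ x₀ := by linarith
    field_simp at h1
    rw [eq_div_iff (mul_ne_zero (ne_of_lt hPx₀) (ne_of_gt hVx₀))]
    linear_combination h1
  refine ⟨hderiv, ?_⟩
  rw [hderiv]
  apply div_neg_of_pos_of_neg
  · positivity
  · exact mul_neg_of_neg_of_pos hPx₀ hVx₀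
end

section
/- Let β, γ, B, α, δ ∈ ℝ with B > δ > 0, α ≠ 0, β ≠ 0, and set x* = −(B−δ)/α. Assume V(x*) ≠ 0, where V(x) = βx² − γx + 1. Then hp is an involution: for every x ∈ ℝ with X^sl(x) ≠ 0 (which implies X^sl(hp(x)) ≠ 0), one has hp(hp(x)) = x. -/
/-- The sliding vector field `X^sl(x) = (B − δ + αx)/(1 + δ)`. -/
noncomputable def Xsl (B α δ x : ℝ) : ℝ := (B - δ + α * x) / (1 + δ)

/-- The hyperbola function `hp(x) = (α + γ(B−δ) − β(B−δ)x)/(β(1+δ)X^sl(x))`. -/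
noncomputable def hp (β γ B α δ x : ℝ) : ℝ :=
  (α + γ * (B - δ) - β * (B - δ) * x) / (β * (1 + δ) * Xsl B α δ x)

lemma hp_eq (β γ B α δ y : ℝ) (hβ : β ≠ 0) (h1δ : (1:ℝ) + δ ≠ 0)
    (hd : B - δ + α * y ≠ 0) :
    hp β γ B α δ y = (α + γ * (B - δ) - β * (B - δ) * y) / (β * (B - δ + α * y)) := by
  unfold hp Xsl
  rw [div_eq_div_iff (mul_ne_zero (mul_ne_zero hβ h1δ) (by
    rw [div_ne_zero_iff]; exact ⟨hd, h1δ⟩)) (mul_ne_zero hβ hd)]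
  field_simp

/-- The function `hp` is an involution (Section 3.1, case 2): if `B > δ > 0`,
`α ≠ 0`, `β ≠ 0` and `V(x*) ≠ 0` with `x* = −(B−δ)/α`, then for every `x` with
`X^sl(x) ≠ 0` one has `X^sl(hp(x)) ≠ 0` and `hp(hp(x)) = x`. -/
theorem hp_involution (β γ B α δ : ℝ) (hBδ : B > δ) (hδ : δ > 0)
    (hα : α ≠ 0) (hβ : β ≠ 0)
    (hV : Vq β γ (-(B - δ) / α) ≠ 0) :
    ∀ x : ℝ, Xsl B α δ x ≠ 0 →
      Xsl B α δ (hp β γ B α δ x) ≠ 0 ∧ hp β γ B α δ (hp β γ B α δ x) = x := by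
  intro x hx
  have h1δ : (1:ℝ) + δ ≠ 0 := by linarith
  have hden : B - δ + α * x ≠ 0 := by
    intro h; apply hx; unfold Xsl; rw [h]; simp
  have hK : β * (B - δ)^2 + α * γ * (B - δ) + α^2 ≠ 0 := by
    have : β * (B - δ)^2 + α * γ * (B - δ) + α^2 = α^2 * Vq β γ (-(B - δ) / α) := by
      unfold Vq; field_simp; ring
    rw [this]
    exact mul_ne_zero (pow_ne_zero 2 hα) hV
  have hhp := hp_eq β γ B α δ x hβ h1δ hden
  have key : B - δ + α * hp β γ B α δ x =
      (β * (B - δ)^2 + α * γ * (B - δ) + α^2) / (β * (B - δ + α * x)) := by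
    rw [hhp]
    field_simp
    ring
  have hXhp : Xsl B α δ (hp β γ B α δ x) ≠ 0 := by
    unfold Xsl
    rw [key, div_ne_zero_iff]
    exact ⟨by rw [div_ne_zero_iff]; exact ⟨hK, mul_ne_zero hβ hden⟩, h1δ⟩
  refine ⟨hXhp, ?_⟩
  have hden2 : B - δ + α * hp β γ B α δ x ≠ 0 := by
    rw [key, div_ne_zero_iff]; exact ⟨hK, mul_ne_zero hβ hden⟩
  have hhp2 := hp_eq β γ B α δ (hp β γ B α δ x) hβ h1δ hden2
  rw [hhp2, key, hhp]
  rw [div_eq_iff (by rw [mul_ne_zero_iff, div_ne_zero_iff]; exact ⟨hβ, hK, mul_ne_zero hβ hden⟩)]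
  field_simp
  ring
end

section
/- Let β, γ, B, α, δ ∈ ℝ with B > δ > 0 and β ≠ 0, and let x ∈ ℝ with X^sl(x) ≠ 0. Then Δ̄(x,y) = β(1+δ)·X^sl(x)·(y − hp(x)) for all y ∈ ℝ. Consequently, if X^sl(x) > 0: (i) when β < 0, y < hp(x) implies Δ̄(x,y) > 0 and y > hp(x) implies Δ̄(x,y) < 0; (ii) when β > 0, y < hp(x) implies Δ̄(x,y) < 0 and y > hp(x) implies Δ̄(x,y) > 0. -/
/-- `Δ̄(x,y) = αβ·xy + β(B−δ)(x+y) − α − γ(B−δ)`. -/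
def Dbar (β γ B α δ x y : ℝ) : ℝ :=
  α * β * (x * y) + β * (B - δ) * (x + y) - α - γ * (B - δ)

/-- Algebraic content of Lemma 3.2: `Δ̄(x,y) = β(1+δ)X^sl(x)(y − hp(x))` whenever
`β ≠ 0` and `X^sl(x) ≠ 0`; consequently, when `X^sl(x) > 0`, the position of `y`
relative to `hp(x)` determines the sign of `Δ̄(x,y)` according to the sign of `β`. -/
theorem Dbar_sign (β γ B α δ : ℝ) (hBδ : B > δ) (hδ : δ > 0) (hβ : β ≠ 0)
    (x : ℝ) (hx : Xsl B α δ x ≠ 0) :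
    (∀ y : ℝ,
      Dbar β γ B α δ x y = β * (1 + δ) * Xsl B α δ x * (y - hp β γ B α δ x)) ∧
    (Xsl B α δ x > 0 →
      (β < 0 → ∀ y : ℝ,
        (y < hp β γ B α δ x → Dbar β γ B α δ x y > 0) ∧
        (y > hp β γ B α δ x → Dbar β γ B α δ x y < 0)) ∧
      (β > 0 → ∀ y : ℝ,
        (y < hp β γ B α δ x → Dbar β γ B α δ x y < 0) ∧
        (y > hp β γ B α δ x → Dbar β γ B α δ x y > 0))) := by
  have h1δ : (1:ℝ) + δ ≠ 0 := by linarith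
  have hD : β * (1 + δ) * Xsl B α δ x ≠ 0 := by
    exact mul_ne_zero (mul_ne_zero hβ h1δ) hx
  have key : ∀ y : ℝ,
      Dbar β γ B α δ x y = β * (1 + δ) * Xsl B α δ x * (y - hp β γ B α δ x) := by
    intro y
    rw [hp, mul_sub, mul_div_cancel₀ _ hD]
    simp only [Dbar, Xsl]
    field_simp
    ring
  refine ⟨key, fun hxpos => ⟨?_, ?_⟩⟩
  · intro hβneg y
    have hc : β * (1 + δ) * Xsl B α δ x < 0 := by
      apply mul_neg_of_neg_of_pos _ hxpos
      exact mul_neg_of_neg_of_pos hβneg (by linarith)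
    constructor <;> intro hy <;> rw [key y]
    · exact mul_pos_of_neg_of_neg hc (by linarith)
    · exact mul_neg_of_neg_of_pos hc (by linarith)
  · intro hβpos y
    have hc : 0 < β * (1 + δ) * Xsl B α δ x := by
      apply mul_pos _ hxpos
      exact mul_pos hβpos (by linarith)
    constructor <;> intro hy <;> rw [key y]
    · exact mul_neg_of_pos_of_neg hc (by linarith)
    · exact mul_pos hc (by linarith)
end

section
/- Let β = 0, γ ∈ ℝ, b > 0, let Π : [0,b) → ℝ be a Poincaré half-map datum (so V(x) = 1 − γx), and let B, α, δ ∈ ℝ with B > δ > 0 be such that X^sl(u) > 0 for all u ∈ [Π(x), x] and all x ∈ [0,b). Define Ĩ(x) = ∫_{Π(x)}^{x} u/X^sl(u) du. If α + γ(B−δ) > 0 then Ĩ(x) < 0 for all x ∈ (0,b); if α + γ(B−δ) < 0 then Ĩ(x) > 0 for all x ∈ (0,b). -/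
/-- The slow divergence integral (up to a positive constant)
`Ĩ(x) = ∫_{P x}^{x} u / X^sl(u) du`. -/
noncomputable def Itil (B α δ : ℝ) (P : ℝ → ℝ) (x : ℝ) : ℝ :=
  ∫ u in (P x)..x, u / Xsl B α δ u

/-!
With `c = B − δ` and `V(u) = 1 − γu` one has the partial-fraction identity
`c · u/(c + αu) = u/V(u) − (α + γc) · u²/((c + αu) V(u))`.
Integrating over `[Π(x), x]`, the first term vanishes by the defining property of the half-map, so
`c · Ĩ(x) = −(1 + δ)(α + γc) · J(x)` with `J(x) = ∫ u²/((c + αu) V(u)) > 0`.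
-/

open Set MeasureTheory intervalIntegral

lemma mul_div_linear_eq_sub {c α γ u : ℝ} (h₁ : c + α * u ≠ 0) (h₂ : 1 - γ * u ≠ 0) :
    c * (u / (c + α * u)) =
      u / (1 - γ * u) - (α + γ * c) * (u ^ 2 / ((c + α * u) * (1 - γ * u))) := by
  rw [eq_sub_iff_add_eq, mul_div_assoc', mul_div_assoc', div_add_div _ _ h₁ (mul_ne_zero h₁ h₂),
    div_eq_div_iff (mul_ne_zero h₁ (mul_ne_zero h₁ h₂)) h₂]
  ring

lemma integral_sq_div_pos {f : ℝ → ℝ} {a b : ℝ} (ha : a ≤ 0) (hb : 0 < b)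
    (hf : ContinuousOn f (Icc a b)) (hpos : ∀ u ∈ Icc a b, 0 < f u) :
    0 < ∫ u in a..b, u ^ 2 / f u := by
  have hab : a ≤ b := ha.trans hb.le
  have hint : IntervalIntegrable (fun u => u ^ 2 / f u) volume a b :=
    ((continuousOn_pow 2).div hf fun u hu => (hpos u hu).ne').intervalIntegrable_of_Icc hab
  have hsub_left : uIcc a 0 ⊆ uIcc a b :=
    uIcc_subset_uIcc_left (by simp [uIcc_of_le hab, ha, hb.le])
  have hsub_right : uIcc 0 b ⊆ uIcc a b :=
    uIcc_subset_uIcc_right (by simp [uIcc_of_le hab, ha, hb.le])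
  have hleft : 0 ≤ ∫ u in a..0, u ^ 2 / f u :=
    integral_nonneg ha fun u hu => div_nonneg (sq_nonneg u) (hpos u ⟨hu.1, hu.2.trans hb.le⟩).le
  have hright : 0 < ∫ u in (0 : ℝ)..b, u ^ 2 / f u :=
    intervalIntegral_pos_of_pos_on (hint.mono_set hsub_right)
      (fun u hu => div_pos (pow_pos hu.1 2) (hpos u ⟨ha.trans hu.1.le, hu.2.le⟩)) hb
  rw [← integral_add_adjacent_intervals (hint.mono_set hsub_left) (hint.mono_set hsub_right)]
  linarith

lemma mul_integral_div_Xsl_eq {B α δ γ a b : ℝ} (hab : a ≤ b)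
    (hX : ∀ u ∈ Icc a b, 0 < B - δ + α * u) (hV : ∀ u ∈ Icc a b, 0 < 1 - γ * u) :
    (B - δ) * ∫ u in a..b, u / Xsl B α δ u =
      (1 + δ) * ((∫ u in a..b, u / (1 - γ * u)) - (α + γ * (B - δ)) *
        ∫ u in a..b, u ^ 2 / ((B - δ + α * u) * (1 - γ * u))) := by
  have hcontV : ContinuousOn (fun u => 1 - γ * u) (Icc a b) := by fun_prop
  have hcontX : ContinuousOn (fun u => B - δ + α * u) (Icc a b) := by fun_prop
  have hint₁ : IntervalIntegrable (fun u => u / (1 - γ * u)) volume a b :=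
    (continuousOn_id.div hcontV fun u hu => (hV u hu).ne').intervalIntegrable_of_Icc hab
  have hint₂ : IntervalIntegrable
      (fun u => u ^ 2 / ((B - δ + α * u) * (1 - γ * u))) volume a b :=
    ((continuousOn_pow 2).div (hcontX.mul hcontV) fun u hu =>
      (mul_pos (hX u hu) (hV u hu)).ne').intervalIntegrable_of_Icc hab
  have hpointwise : EqOn (fun u => (B - δ) * (u / Xsl B α δ u))
      (fun u => (1 + δ) * (u / (1 - γ * u)) - (1 + δ) * (α + γ * (B - δ)) *
        (u ^ 2 / ((B - δ + α * u) * (1 - γ * u)))) (uIcc a b) := by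
    intro u hu
    rw [uIcc_of_le hab] at hu
    have hdiv : u / Xsl B α δ u = (1 + δ) * (u / (B - δ + α * u)) := by
      rw [Xsl, div_div_eq_mul_div, mul_comm u, mul_div_assoc]
    simp only [hdiv, mul_left_comm (B - δ), mul_div_linear_eq_sub (hX u hu).ne' (hV u hu).ne']
    ring
  rw [← intervalIntegral.integral_const_mul, integral_congr hpointwise,
    integral_sub (hint₁.const_mul _) (hint₂.const_mul _), intervalIntegral.integral_const_mul,
    intervalIntegral.integral_const_mul]
  ring

theorem slow_divergence_integral_sign_beta_zero_general (γ b B α δ : ℝ)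
    (hBδ : B > δ) (hδ : δ > 0) (P : ℝ → ℝ)
    (hPneg : ∀ x ∈ Set.Ioo 0 b, P x < 0)
    (hV : ∀ x ∈ Set.Ioo 0 b, ∀ u ∈ Set.Icc (P x) x, 1 - γ * u > 0)
    (hint : ∀ x ∈ Set.Ioo 0 b, ∫ u in (P x)..x, u / (1 - γ * u) = 0)
    (hXsl : ∀ x ∈ Set.Ico 0 b, ∀ u ∈ Set.Icc (P x) x, Xsl B α δ u > 0) :
    (α + γ * (B - δ) > 0 → ∀ x ∈ Set.Ioo 0 b, Itil B α δ P x < 0) ∧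
    (α + γ * (B - δ) < 0 → ∀ x ∈ Set.Ioo 0 b, Itil B α δ P x > 0) := by
  have hc : 0 < B - δ := sub_pos.mpr hBδ
  have hd : 0 < 1 + δ := by linarith
  have key : ∀ x ∈ Ioo 0 b, ∃ J > 0,
      (B - δ) * Itil B α δ P x = -((1 + δ) * (α + γ * (B - δ)) * J) := by
    intro x hx
    have hPx := hPneg x hx
    have hX : ∀ u ∈ Icc (P x) x, 0 < B - δ + α * u := fun u hu =>
      (div_pos_iff_of_pos_right hd).mp (hXsl x (Ioo_subset_Ico_self hx) u hu)
    refine ⟨_, integral_sq_div_pos hPx.le hx.1 (by fun_prop)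
      fun u hu => mul_pos (hX u hu) (hV x hx u hu), ?_⟩
    rw [Itil, mul_integral_div_Xsl_eq (by linarith [hx.1]) hX (hV x hx), hint x hx]
    ring
  constructor
  · intro hs x hx
    obtain ⟨J, hJ, hI⟩ := key x hx
    nlinarith [mul_pos (mul_pos hd hs) hJ]
  · intro hs x hx
    obtain ⟨J, hJ, hI⟩ := key x hx
    nlinarith [mul_pos (mul_pos hd (neg_pos.mpr hs)) hJ]

/-- Theorem 3.2, Statement 1: in the case `β = 0` (so `V(x) = 1 − γx`), the slow
divergence integral `Ĩ` is negative on `(0,b)` when `α + γ(B−δ) > 0` and positive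
on `(0,b)` when `α + γ(B−δ) < 0`. -/
theorem slow_divergence_integral_sign_beta_zero (γ b B α δ : ℝ)
    (hb : 0 < b) (hBδ : B > δ) (hδ : δ > 0) (P : ℝ → ℝ)
    (hdiff : DifferentiableOn ℝ P (Set.Ico 0 b))
    (hP0 : P 0 = 0)
    (hPneg : ∀ x ∈ Set.Ioo 0 b, P x < 0)
    (hV : ∀ x ∈ Set.Ioo 0 b, ∀ u ∈ Set.Icc (P x) x, 1 - γ * u > 0)
    (hint : ∀ x ∈ Set.Ioo 0 b, ∫ u in (P x)..x, u / (1 - γ * u) = 0)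
    (hXsl : ∀ x ∈ Set.Ico 0 b, ∀ u ∈ Set.Icc (P x) x, Xsl B α δ u > 0) :
    (α + γ * (B - δ) > 0 → ∀ x ∈ Set.Ioo 0 b, Itil B α δ P x < 0) ∧
    (α + γ * (B - δ) < 0 → ∀ x ∈ Set.Ioo 0 b, Itil B α δ P x > 0) :=
  slow_divergence_integral_sign_beta_zero_general γ b B α δ hBδ hδ P hPneg hV hint hXsl
end

section
/- Let c > 0, α ∈ ℝ, and x > 0 with c + αu > 0 for all u ∈ [−x, x]. If α > 0 then ∫_{−x}^{x} u/(c + αu) du < 0, and if α < 0 then ∫_{−x}^{x} u/(c + αu) du > 0. -/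
open intervalIntegral Set

lemma integrable_aux (c α x : ℝ) (hx : 0 < x)
    (hpos : ∀ u ∈ Set.Icc (-x) x, c + α * u > 0) :
    IntervalIntegrable (fun u => u / (c + α * u)) MeasureTheory.volume (-x) x := by
  apply ContinuousOn.intervalIntegrable
  have h : Set.uIcc (-x) x = Set.Icc (-x) x := by
    rw [Set.uIcc_of_le (by linarith)]
  rw [h]
  exact continuousOn_id.div (continuous_const.add (continuous_const.mul continuous_id)).continuousOn
    (fun u hu => ne_of_gt (hpos u hu))

lemma key_neg (c α x : ℝ) (hc : 0 < c) (hx : 0 < x)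
    (hpos : ∀ u ∈ Set.Icc (-x) x, c + α * u > 0) (hα : 0 < α) :
    ∫ u in (-x)..x, u / (c + α * u) < 0 := by
  have hmem : ∀ u ∈ Set.Icc (0:ℝ) x, c + α * u > 0 := fun u hu =>
    hpos u ⟨by linarith [hu.1], hu.2⟩
  have hmem' : ∀ u ∈ Set.Icc (0:ℝ) x, c - α * u > 0 := by
    intro u hu
    have := hpos (-u) ⟨by linarith [hu.2], by linarith [hu.1]⟩
    linarith [this]
  have hI := integrable_aux c α x hx hpos
  have hI1 : IntervalIntegrable (fun u => u / (c + α * u)) MeasureTheory.volume (-x) 0 :=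
    hI.mono_set (by rw [Set.uIcc_of_le (by linarith : (-x:ℝ) ≤ 0),
      Set.uIcc_of_le (by linarith : (-x:ℝ) ≤ x)]; exact Set.Icc_subset_Icc le_rfl (le_of_lt hx))
  have hI2 : IntervalIntegrable (fun u => u / (c + α * u)) MeasureTheory.volume 0 x :=
    hI.mono_set (by rw [Set.uIcc_of_le (le_of_lt hx),
      Set.uIcc_of_le (by linarith : (-x:ℝ) ≤ x)]; exact Set.Icc_subset_Icc (by linarith) le_rfl)
  have hsplit : (∫ u in (-x)..x, u / (c + α * u)) =
      (∫ u in (-x)..(0:ℝ), u / (c + α * u)) + ∫ u in (0:ℝ)..x, u / (c + α * u) :=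
    (integral_add_adjacent_intervals hI1 hI2).symm
  have hneg : (∫ u in (-x)..(0:ℝ), u / (c + α * u)) =
      ∫ u in (0:ℝ)..x, (-u) / (c + α * (-u)) := by
    have := intervalIntegral.integral_comp_neg (a := 0) (b := x)
      (f := fun u => u / (c + α * u))
    simpa using this.symm
  -- the combined integrand
  have hI3 : IntervalIntegrable (fun u => (-u) / (c + α * (-u))) MeasureTheory.volume 0 x := by
    apply ContinuousOn.intervalIntegrable
    rw [Set.uIcc_of_le (le_of_lt hx)]
    refine (continuous_neg.continuousOn).div
      ((continuous_const.add (continuous_const.mul continuous_neg)).continuousOn) ?_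
    intro u hu
    have := hmem' u hu
    intro h; nlinarith [h]
  have hcomb : (∫ u in (0:ℝ)..x, (-u) / (c + α * (-u))) + (∫ u in (0:ℝ)..x, u / (c + α * u)) =
      ∫ u in (0:ℝ)..x, ((-u) / (c + α * (-u)) + u / (c + α * u)) :=
    (intervalIntegral.integral_add hI3 hI2).symm
  rw [hsplit, hneg, hcomb]
  have hptneg : ∀ u ∈ Set.Ioo (0:ℝ) x, 0 < -((-u) / (c + α * (-u)) + u / (c + α * u)) := by
    intro u hu
    have h1 : 0 < c - α * u := hmem' u ⟨le_of_lt hu.1, le_of_lt hu.2⟩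
    have h2 : 0 < c + α * u := hmem u ⟨le_of_lt hu.1, le_of_lt hu.2⟩
    have h3 : u / (c + α * u) < u / (c - α * u) :=
      div_lt_div_of_pos_left hu.1 h1 (by nlinarith [mul_pos hα hu.1])
    have : c + α * (-u) = c - α * u := by ring
    rw [this, neg_div]
    linarith
  have hpos' : 0 < ∫ u in (0:ℝ)..x, -((-u) / (c + α * (-u)) + u / (c + α * u)) := by
    apply intervalIntegral.intervalIntegral_pos_of_pos_on
    · exact (hI3.add hI2).neg
    · exact hptneg
    · exact hx
  rw [intervalIntegral.integral_neg] at hpos'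
  linarith

/-- Computational core of Theorem 3.2, Statement 2: for `c > 0`, `x > 0` and
`c + αu > 0` on `[−x, x]`, the integral `∫_{−x}^{x} u/(c + αu) du` is negative
when `α > 0` and positive when `α < 0`. -/
theorem integral_sign_symmetric (c α x : ℝ) (hc : 0 < c) (hx : 0 < x)
    (hpos : ∀ u ∈ Set.Icc (-x) x, c + α * u > 0) :
    (0 < α → ∫ u in (-x)..x, u / (c + α * u) < 0) ∧
    (α < 0 → 0 < ∫ u in (-x)..x, u / (c + α * u)) := by
  constructor
  · intro hα; exact key_neg c α x hc hx hpos hα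
  · intro hα
    have hpos' : ∀ u ∈ Set.Icc (-x) x, c + (-α) * u > 0 := by
      intro u hu
      have := hpos (-u) ⟨by linarith [hu.2], by linarith [hu.1]⟩
      linarith [this]
    have hkey := key_neg c (-α) x hc hx hpos' (by linarith)
    have heq : (∫ u in (-x)..x, u / (c + α * u)) =
        - ∫ u in (-x)..x, u / (c + (-α) * u) := by
      have := intervalIntegral.integral_comp_neg (a := -x) (b := x)
        (f := fun u => u / (c + α * u))
      simp only [neg_neg] at this
      rw [← this]
      rw [← intervalIntegral.integral_neg]
      congr 1
      funext u
      rw [show c + α * -u = c + (-α) * u by ring, neg_div]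
    rw [heq]
    linarith
end

section
/- Let β < 0, γ > 0, set x_L = 2/(γ − √(γ² − 4β)) and x_R = 2/(γ + √(γ² − 4β)), let x* ∈ ℝ with x* ∉ {x_L, x_R}, and (when (γx* − 1)/β ≥ 0) set x_C = √((γx* − 1)/β). Then: (1) if x* = 1/γ, then x_C = 0; (2) if x_R < x* < 1/γ, then 0 < x_C < x_R; (3) if x_L < x* < x_R, then x_R < x_C < −x_L; (4) if x* < x_L, then −x_L < x_C < −x*. -/
/-!
Write `V x = β x² - γ x + 1`. Whenever `γ x* ≤ 1`, the contact abscissa satisfies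
`β x_C² = γ x* - 1`, so comparing `x_C` with a nonnegative `a` amounts (since `β < 0`) to comparing
`γ x* - 1` with `β a²`. For `a = x_R` or `a = -x_L` one has `β a² = γ a' - 1` with `a'` the root
of `V`, which turns each comparison into one between `x*` and that root. The last bound
`x_C < -x*` is equivalent to `V x* < 0`, which holds to the left of both roots because
`V x = β (x - x_L)(x - x_R)`.
-/

section SqrtDivNeg

variable {u β a : ℝ}

lemma sqrt_div_lt_iff_of_neg (hβ : β < 0) (ha : 0 < a) : √(u / β) < a ↔ β * a ^ 2 < u := by
  rw [Real.sqrt_lt' ha, div_lt_iff_of_neg hβ, mul_comm]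

lemma lt_sqrt_div_iff_of_neg (hβ : β < 0) (ha : 0 ≤ a) : a < √(u / β) ↔ u < β * a ^ 2 := by
  rw [Real.lt_sqrt ha, lt_div_iff_of_neg hβ, mul_comm]

end SqrtDivNeg

section Quadratic

variable {β γ r x a : ℝ}

lemma quadratic_two_div_eq_zero {s : ℝ} (hs : s ^ 2 = γ ^ 2 - 4 * β) (h : γ + s ≠ 0) :
    β * (2 / (γ + s)) ^ 2 - γ * (2 / (γ + s)) + 1 = 0 := by
  field_simp
  linear_combination hs

lemma quadratic_eq_mul_sub_mul_sub {r₁ r₂ : ℝ} (h₁ : β * r₁ ^ 2 - γ * r₁ + 1 = 0)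
    (h₂ : β * r₂ ^ 2 - γ * r₂ + 1 = 0) (hne : r₁ ≠ r₂) (x : ℝ) :
    β * x ^ 2 - γ * x + 1 = β * (x - r₁) * (x - r₂) := by
  have hsum : β * (r₁ + r₂) = γ := by
    have : (r₁ - r₂) * (β * (r₁ + r₂) - γ) = 0 := by linear_combination h₁ - h₂
    linarith [(mul_eq_zero.mp this).resolve_left (sub_ne_zero.mpr hne)]
  linear_combination h₁ + (x - r₁) * hsum

lemma sqrt_lt_iff_of_quadratic_eq_zero (hβ : β < 0) (hγ : 0 < γ)
    (hr : β * r ^ 2 - γ * r + 1 = 0) (ha : 0 < a) (har : a ^ 2 = r ^ 2) :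
    √((γ * x - 1) / β) < a ↔ r < x := by
  rw [sqrt_div_lt_iff_of_neg hβ ha, har, show β * r ^ 2 = γ * r - 1 by linarith,
    sub_lt_sub_iff_right, mul_lt_mul_iff_right₀ hγ]

lemma lt_sqrt_iff_of_quadratic_eq_zero (hβ : β < 0) (hγ : 0 < γ)
    (hr : β * r ^ 2 - γ * r + 1 = 0) (ha : 0 ≤ a) (har : a ^ 2 = r ^ 2) :
    a < √((γ * x - 1) / β) ↔ x < r := by
  rw [lt_sqrt_div_iff_of_neg hβ ha, har, show β * r ^ 2 = γ * r - 1 by linarith,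
    sub_lt_sub_iff_right, mul_lt_mul_iff_right₀ hγ]

end Quadratic

theorem contact_abscissa_saddle_general (β γ xstar xL xR xC : ℝ)
    (hβ : β < 0) (hγ : 0 < γ)
    (hxL : xL = 2 / (γ - Real.sqrt (γ ^ 2 - 4 * β)))
    (hxR : xR = 2 / (γ + Real.sqrt (γ ^ 2 - 4 * β)))
    (hxC : xC = Real.sqrt ((γ * xstar - 1) / β)) :
    (xstar = 1 / γ → xC = 0) ∧
    (xR < xstar → xstar < 1 / γ → 0 < xC ∧ xC < xR) ∧
    (xL < xstar → xstar < xR → xR < xC ∧ xC < -xL) ∧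
    (xstar < xL → -xL < xC ∧ xC < -xstar) := by
  set s := √(γ ^ 2 - 4 * β)
  have hs : s ^ 2 = γ ^ 2 - 4 * β := Real.sq_sqrt (by nlinarith)
  have hγs : γ < s := by nlinarith [Real.sqrt_nonneg (γ ^ 2 - 4 * β)]
  have hL : β * xL ^ 2 - γ * xL + 1 = 0 := by
    rw [hxL, sub_eq_add_neg]
    exact quadratic_two_div_eq_zero (by rw [neg_sq, hs]) (by linarith)
  have hR : β * xR ^ 2 - γ * xR + 1 = 0 := hxR ▸ quadratic_two_div_eq_zero hs (by linarith)
  have hxL_neg : xL < 0 := hxL ▸ div_neg_of_pos_of_neg two_pos (by linarith)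
  have hxR_pos : 0 < xR := hxR ▸ div_pos two_pos (by linarith)
  have hxR_lt : xR < 1 / γ := by
    rw [hxR, div_lt_div_iff₀ (by linarith) hγ]
    linarith
  have hsqL : (-xL) ^ 2 = xL ^ 2 := neg_sq xL
  subst hxC
  refine ⟨fun h => by simp [h, hγ.ne'], fun h₁ h₂ => ⟨?_, ?_⟩, fun h₁ h₂ => ⟨?_, ?_⟩, fun h => ⟨?_, ?_⟩⟩
  · rw [lt_sqrt_div_iff_of_neg hβ le_rfl, zero_pow two_ne_zero, mul_zero, sub_neg,
      ← lt_div_iff₀' hγ]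
    exact h₂
  · exact (sqrt_lt_iff_of_quadratic_eq_zero hβ hγ hR hxR_pos rfl).mpr h₁
  · exact (lt_sqrt_iff_of_quadratic_eq_zero hβ hγ hR hxR_pos.le rfl).mpr h₂
  · exact (sqrt_lt_iff_of_quadratic_eq_zero hβ hγ hL (by linarith) hsqL).mpr h₁
  · exact (lt_sqrt_iff_of_quadratic_eq_zero hβ hγ hL (by linarith) hsqL).mpr h
  · have hV : β * xstar ^ 2 - γ * xstar + 1 < 0 := by
      rw [quadratic_eq_mul_sub_mul_sub hL hR (by linarith) xstar]
      exact mul_neg_of_pos_of_neg (mul_pos_of_neg_of_neg hβ (by linarith)) (by linarith)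
    rw [sqrt_div_lt_iff_of_neg hβ (by linarith), neg_sq]
    linarith

/-- Lemma 3.3 (saddle case): for `β < 0`, `γ > 0`, with `x_L = 2/(γ − √(γ² − 4β))`,
`x_R = 2/(γ + √(γ² − 4β))`, `x* ∉ {x_L, x_R}` and `x_C = √((γx* − 1)/β)`:
(1) `x* = 1/γ ⟹ x_C = 0`; (2) `x_R < x* < 1/γ ⟹ 0 < x_C < x_R`;
(3) `x_L < x* < x_R ⟹ x_R < x_C < −x_L`; (4) `x* < x_L ⟹ −x_L < x_C < −x*`. -/
theorem contact_abscissa_saddle (β γ xstar xL xR xC : ℝ)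
    (hβ : β < 0) (hγ : 0 < γ)
    (hxL : xL = 2 / (γ - Real.sqrt (γ ^ 2 - 4 * β)))
    (hxR : xR = 2 / (γ + Real.sqrt (γ ^ 2 - 4 * β)))
    (hneL : xstar ≠ xL) (hneR : xstar ≠ xR)
    (hxC : xC = Real.sqrt ((γ * xstar - 1) / β)) :
    (xstar = 1 / γ → xC = 0) ∧
    (xR < xstar → xstar < 1 / γ → 0 < xC ∧ xC < xR) ∧
    (xL < xstar → xstar < xR → xR < xC ∧ xC < -xL) ∧
    (xstar < xL → -xL < xC ∧ xC < -xstar) :=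
  contact_abscissa_saddle_general β γ xstar xL xR xC hβ hγ hxL hxR hxC
end

section
/- Let β > 0, γ > 0 with γ² − 4β > 0, set x_L = 2/(γ + √(γ² − 4β)) and x_R = 2/(γ − √(γ² − 4β)), let x* ∈ ℝ with x* ∉ {x_L, x_R}, and (when (γx* − 1)/β ≥ 0) set x_C = √((γx* − 1)/β). Then: (1) if x_R < x*, then x_R < x_C < x*; (2) if x_L < x* < x_R, then x* < x_C < x_R; (3) if 1/γ < x* < x_L, then 0 < x_C < x*; (4) if x* = 1/γ, then x_C = 0. -/
/-- Lemma 3.4 (node case, distinct eigenvalues): for `β > 0`, `γ > 0`,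
`γ² − 4β > 0`, with `x_L = 2/(γ + √(γ² − 4β))`, `x_R = 2/(γ − √(γ² − 4β))`,
`x* ∉ {x_L, x_R}` and `x_C = √((γx* − 1)/β)`:
(1) `x_R < x* ⟹ x_R < x_C < x*`; (2) `x_L < x* < x_R ⟹ x* < x_C < x_R`;
(3) `1/γ < x* < x_L ⟹ 0 < x_C < x*`; (4) `x* = 1/γ ⟹ x_C = 0`. -/
theorem contact_abscissa_node_distinct (β γ xstar xL xR xC : ℝ)
    (hβ : 0 < β) (hγ : 0 < γ) (hdisc : γ ^ 2 - 4 * β > 0)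
    (hxL : xL = 2 / (γ + Real.sqrt (γ ^ 2 - 4 * β)))
    (hxR : xR = 2 / (γ - Real.sqrt (γ ^ 2 - 4 * β)))
    (hneL : xstar ≠ xL) (hneR : xstar ≠ xR)
    (hxC : xC = Real.sqrt ((γ * xstar - 1) / β)) :
    (xR < xstar → xR < xC ∧ xC < xstar) ∧
    (xL < xstar → xstar < xR → xstar < xC ∧ xC < xR) ∧
    (1 / γ < xstar → xstar < xL → 0 < xC ∧ xC < xstar) ∧
    (xstar = 1 / γ → xC = 0) := by
  set s := Real.sqrt (γ ^ 2 - 4 * β) with hs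
  have hs0 : 0 < s := Real.sqrt_pos.mpr hdisc
  have hs2 : s ^ 2 = γ ^ 2 - 4 * β := Real.sq_sqrt hdisc.le
  clear_value s
  have hsγ : s < γ := by nlinarith
  have hgs : 0 < γ - s := by linarith
  have hgps : 0 < γ + s := by linarith
  have hLpos : 0 < xL := by rw [hxL]; positivity
  have hRpos : 0 < xR := by rw [hxR]; positivity
  have hL : β * xL ^ 2 - γ * xL + 1 = 0 := by
    rw [hxL]; field_simp; nlinarith
  have hR : β * xR ^ 2 - γ * xR + 1 = 0 := by
    rw [hxR]; field_simp; nlinarith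
  have hLR : xL < xR := by
    rw [hxL, hxR]
    apply div_lt_div_of_pos_left (by norm_num) hgs (by linarith)
  have hLγ : 1 / γ < xL := by
    rw [hxL, div_lt_div_iff₀ hγ hgps]; linarith
  -- V(x) = β(x - xL)(x - xR)
  have hfact : ∀ x : ℝ, β * x ^ 2 - γ * x + 1 = β * (x - xL) * (x - xR) := by
    intro x
    have hsum : β * (xL + xR) = γ := by nlinarith
    have hprod : β * (xL * xR) = 1 := by nlinarith
    linear_combination x * hsum - hprod
  refine ⟨?_, ?_, ?_, ?_⟩
  · intro h
    have hx0 : 0 < xstar := hRpos.trans h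
    constructor
    · rw [hxC, Real.lt_sqrt hRpos.le, lt_div_iff₀ hβ]
      nlinarith [hR]
    · rw [hxC, Real.sqrt_lt' hx0, div_lt_iff₀ hβ]
      have hV : 0 < β * (xstar - xL) * (xstar - xR) :=
        mul_pos (mul_pos hβ (by linarith)) (by linarith)
      linarith [hfact xstar]
  · intro h1 h2
    have hx0 : 0 < xstar := hLpos.trans h1
    have hV : β * (xstar - xL) * (xstar - xR) < 0 := by
      exact mul_neg_of_pos_of_neg (mul_pos hβ (by linarith)) (by linarith)
    constructor
    · rw [hxC, Real.lt_sqrt hx0.le, lt_div_iff₀ hβ]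
      linarith [hfact xstar]
    · rw [hxC, Real.sqrt_lt' hRpos, div_lt_iff₀ hβ]
      nlinarith [hR]
  · intro h1 h2
    have hx0 : 0 < xstar := lt_trans (by positivity) h1
    have hx1 : 1 < γ * xstar := by rw [div_lt_iff₀ hγ] at h1; linarith
    constructor
    · rw [hxC]
      exact Real.sqrt_pos.mpr (div_pos (by linarith) hβ)
    · rw [hxC, Real.sqrt_lt' hx0, div_lt_iff₀ hβ]
      have hV : 0 < β * (xstar - xL) * (xstar - xR) :=
        mul_pos_of_neg_of_neg (mul_neg_of_pos_of_neg hβ (by linarith))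
          (by linarith [h2.trans hLR])
      linarith [hfact xstar]
  · intro h
    rw [hxC, h]
    have hg1 : γ * (1 / γ) - 1 = 0 := by
      rw [mul_one_div, div_self hγ.ne', sub_self]
    rw [hg1, zero_div, Real.sqrt_zero]
end

section
/- Let β, γ, B, α, δ ∈ ℝ with B > δ > 0, let b > 0, let Π : [0,b) → ℝ be a Poincaré half-map datum, assume X^sl(u) > 0 for all u ∈ [Π(x), x] and all x ∈ [0,b), and define Ĩ(x) = ∫_{Π(x)}^{x} u/X^sl(u) du. (i) If either (β ≠ 0 and (α, γ) ≠ (0,0)) or (β = 0 and α + γ(B−δ) ≠ 0), then Ĩ has at most one zero in (0,b), and every zero x₀ ∈ (0,b) of Ĩ satisfies Ĩ'(x₀) ≠ 0 (i.e., Ĩ has at most one zero counting multiplicity in (0,b)). (ii) If instead (α, γ) = (0,0), or β = 0 and α + γ(B−δ) = 0, then Ĩ(x) = 0 for all x ∈ [0,b). -/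
/-!
Differentiating `∫_{Π x}^x u/V(u) du = 0` gives `x V(Π x) = Π'(x) Π(x) V(x)`; substituting
this into `Ĩ'(x) = x/X^sl(x) − Π'(x) Π(x)/X^sl(Π x)` shows that `Ĩ'(x)` is a positive multiple of
`G(x) = β((B−δ)(x+y) + αxy) − ((B−δ)γ + α)`, where `y = Π x`.

In case (ii) `G` vanishes identically (when `γ = 0` the half-map is `Π x = −x`), so
`Ĩ ≡ Ĩ(0) = 0`. In case (i), at every zero of `G` its derivative has the sign of `Λγ`, where
`Λ = β(B−δ)² + γ(B−δ)α + α²`; this uses `βxy < 1` and `γ(x + y) < 0`, the latter because the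
odd part of `u/V(u)` has the sign of `γu`. Hence `G` changes sign in one direction only. Since
`Ĩ(0) = 0`, `Λγ Ĩ < 0` on `(0, z]` for every zero `z` of `G`, so Rolle's theorem leaves room for
at most one zero of `Ĩ` in `(0, b)`, which is simple because it is not a zero of `G`.
-/

open Set Filter Topology MeasureTheory

theorem hasDerivWithinAt_intervalIntegral_of_continuousOn {f p q : ℝ → ℝ} {U s : Set ℝ}
    {x p' q' : ℝ} (hU : IsOpen U) (hf : ContinuousOn f U) (hpq : uIcc (p x) (q x) ⊆ U)
    (hp : HasDerivWithinAt p p' s x) (hq : HasDerivWithinAt q q' s x) :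
    HasDerivWithinAt (fun t => ∫ u in p t..q t, f u) (q' * f (q x) - p' * f (p x)) s x := by
  have hpU := hpq left_mem_uIcc
  have hqU := hpq right_mem_uIcc
  have hF := intervalIntegral.integral_hasFDerivAt (hf.mono hpq).intervalIntegrable
    (hf.stronglyMeasurableAtFilter hU _ hpU) (hf.stronglyMeasurableAtFilter hU _ hqU)
    (hf.continuousAt (hU.mem_nhds hpU)) (hf.continuousAt (hU.mem_nhds hqU))
  have h := hF.comp_hasDerivWithinAt x (hp.prodMk hq)
  simp only [sub_apply, ContinuousLinearMap.smulRight_apply,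
    ContinuousLinearMap.coe_snd', ContinuousLinearMap.coe_fst', smul_eq_mul] at h
  exact h

theorem hasDerivWithinAt_integral_id_div {D P : ℝ → ℝ} {s : Set ℝ} {x p : ℝ}
    (hD : Continuous D) (hPx : P x ≤ x) (hDx : ∀ u ∈ Icc (P x) x, D u ≠ 0)
    (hP : HasDerivWithinAt P p s x) :
    HasDerivWithinAt (fun t => ∫ u in P t..t, u / D u) (x / D x - p * (P x / D (P x))) s x := by
  simpa using hasDerivWithinAt_intervalIntegral_of_continuousOn
    (isOpen_ne_fun hD continuous_const) (continuousOn_id.div hD.continuousOn fun u hu => hu)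
    (by rw [id, uIcc_of_le hPx]; exact hDx) hP (hasDerivWithinAt_id x s)

theorem neg_of_lt_of_deriv_pos_at_zeros {G : ℝ → ℝ} {a b : ℝ}
    (hG : ContinuousOn G (Ioo a b))
    (hcross : ∀ z ∈ Ioo a b, G z = 0 → 0 < deriv G z) {x z : ℝ} (hax : a < x) (hxz : x < z)
    (hzb : z < b) (hz : G z = 0) : G x < 0 := by
  have sign_near : ∀ w ∈ Ioo a b, G w = 0 →
      ∀ᶠ t in 𝓝 w, SignType.sign (G t) = SignType.sign (t - w) :=
    fun w hw hw0 => eventually_nhdsWithin_sign_eq_of_deriv_pos (hcross w hw hw0) hw0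
  by_contra! hx
  obtain ⟨x', ⟨hxx', hx'z⟩, hGx'⟩ : ∃ x' ∈ Ico x z, 0 < G x' := by
    rcases hx.lt_or_eq with hx | hx
    · exact ⟨x, ⟨le_rfl, hxz⟩, hx⟩
    obtain ⟨t, hsign, ht⟩ := ((sign_near x ⟨hax, hxz.trans hzb⟩ hx.symm).filter_mono
      nhdsWithin_le_nhds |>.and (Ioo_mem_nhdsGT hxz)).exists
    rw [sign_pos (sub_pos.2 ht.1), sign_eq_one_iff] at hsign
    exact ⟨t, ⟨ht.1.le, ht.2⟩, hsign⟩
  have hGon : ContinuousOn G (Icc x' z) := hG.mono (Icc_subset_Ioo (hax.trans_le hxx') hzb)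
  have hZ : IsCompact (Icc x' z ∩ G ⁻¹' {0}) :=
    isCompact_Icc.of_isClosed_subset
      (hGon.preimage_isClosed_of_isClosed isClosed_Icc isClosed_singleton) inter_subset_left
  obtain ⟨w, ⟨⟨hx'w, hwz⟩, hw0⟩, hmin⟩ :=
    hZ.exists_isLeast ⟨z, ⟨hx'z.le, le_rfl⟩, hz⟩
  have hx'w : x' < w := hx'w.lt_of_ne (by rintro rfl; exact hGx'.ne' hw0)
  obtain ⟨t, hsign, ht⟩ := ((sign_near w ⟨by linarith, hwz.trans_lt hzb⟩ hw0).filter_mono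
    nhdsWithin_le_nhds |>.and (Ioo_mem_nhdsLT hx'w)).exists
  rw [sign_neg (sub_neg.2 ht.2), sign_eq_neg_one_iff] at hsign
  obtain ⟨s, hs, hs0⟩ := intermediate_value_Icc' ht.1.le
    (hGon.mono (Icc_subset_Icc_right (by linarith))) ⟨hsign.le, hGx'.le⟩
  linarith [hmin ⟨⟨hs.1, hs.2.trans (ht.2.le.trans hwz)⟩, hs0⟩, hs.2, ht.2]

theorem mul_neg_of_le_zero_of_hasDerivAt_mul {I G : ℝ → ℝ} {b c z : ℝ} (hI0 : I 0 = 0)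
    (hIc : ContinuousOn I (Ico 0 b)) (hI : ∀ x ∈ Ioo 0 b, ∃ r > 0, HasDerivAt I (r * G x) x)
    (hGc : ContinuousOn G (Ioo 0 b)) (hcross : ∀ z ∈ Ioo 0 b, G z = 0 → 0 < c * deriv G z)
    (hz : z ∈ Ioo 0 b) (hGz : G z = 0) : ∀ x ∈ Ioc 0 z, c * I x < 0 := by
  have hc : c ≠ 0 := by rintro rfl; simpa using hcross z hz hGz
  have hcG : ∀ x ∈ Ioo 0 z, c * G x < 0 := by
    intro x hx
    refine neg_of_lt_of_deriv_pos_at_zeros (G := fun t => c * G t) (hGc.const_smul c)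
      (fun w hw hw0 => ?_) hx.1 hx.2 hz.2 (by simp [hGz])
    have hGw : G w = 0 := by simpa [hc] using hw0
    have hdiff := differentiableAt_of_deriv_ne_zero (right_ne_zero_of_mul (hcross w hw hGw).ne')
    simpa [deriv_const_mul c hdiff] using hcross w hw hGw
  have hanti : StrictAntiOn (fun t => c * I t) (Icc 0 z) := by
    refine strictAntiOn_of_deriv_neg (convex_Icc 0 z)
      ((hIc.mono (Icc_subset_Ico_right hz.2)).const_smul c) fun x hx => ?_
    rw [interior_Icc] at hx
    obtain ⟨r, hr, hd⟩ := hI x ⟨hx.1, hx.2.trans hz.2⟩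
    rw [(hd.const_mul c).deriv, mul_left_comm]
    exact mul_neg_of_pos_of_neg hr (hcG x hx)
  intro x hx
  simpa [hI0] using hanti (left_mem_Icc.2 hz.1.le) ⟨hx.1.le, hx.2⟩ hx.1

theorem deriv_ne_zero_and_unique_of_hasDerivAt_mul {I G : ℝ → ℝ} {b c : ℝ} (hI0 : I 0 = 0)
    (hIc : ContinuousOn I (Ico 0 b)) (hI : ∀ x ∈ Ioo 0 b, ∃ r > 0, HasDerivAt I (r * G x) x)
    (hGc : ContinuousOn G (Ioo 0 b)) (hcross : ∀ z ∈ Ioo 0 b, G z = 0 → 0 < c * deriv G z)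
    {x₀ : ℝ} (hx₀ : x₀ ∈ Ioo 0 b) (hIx₀ : I x₀ = 0) :
    deriv I x₀ ≠ 0 ∧ ∀ x₁ ∈ Ioo 0 b, I x₁ = 0 → x₁ = x₀ := by
  have zero_of_deriv : ∀ x ∈ Ioo 0 b, deriv I x = 0 → G x = 0 := by
    intro x hx hx0
    obtain ⟨r, hr, hd⟩ := hI x hx
    simpa [hd.deriv, hr.ne'] using hx0
  have neg_before : ∀ z ∈ Ioo 0 b, G z = 0 → ∀ x ∈ Ioc 0 z, c * I x < 0 := fun z hz hGz =>
    mul_neg_of_le_zero_of_hasDerivAt_mul hI0 hIc hI hGc hcross hz hGz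
  have no_two_zeros : ∀ u ∈ Ioo 0 b, ∀ v ∈ Ioo 0 b, u < v → I u = 0 → I v ≠ 0 := by
    intro u hu v hv huv hIu hIv
    obtain ⟨w, hw, hw0⟩ := exists_deriv_eq_zero huv
      (hIc.mono (Icc_subset_Ico hu.1.le hv.2)) (hIu.trans hIv.symm)
    have hwb : w ∈ Ioo 0 b := ⟨hu.1.trans hw.1, hw.2.trans hv.2⟩
    simpa [hIu] using neg_before w hwb (zero_of_deriv w hwb hw0) u ⟨hu.1, hw.1.le⟩
  refine ⟨fun h0 => ?_, fun x₁ hx₁ hIx₁ => ?_⟩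
  · exact (neg_before x₀ hx₀ (zero_of_deriv x₀ hx₀ h0) x₀ ⟨hx₀.1, le_rfl⟩).ne (by simp [hIx₀])
  · by_contra hne
    rcases lt_or_gt_of_ne hne with h | h
    · exact no_two_zeros x₁ hx₁ x₀ hx₀ h hIx₁ hIx₀
    · exact no_two_zeros x₀ hx₀ x₁ hx₁ h hIx₀ hIx₁

theorem eq_left_of_hasDerivAt_zero {f : ℝ → ℝ} {b : ℝ} (hc : ContinuousOn f (Ico 0 b))
    (hd : ∀ x ∈ Ioo 0 b, HasDerivAt f 0 x) : ∀ x ∈ Ico 0 b, f x = f 0 := by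
  intro x hx
  rcases hx.1.eq_or_lt with rfl | hx0
  · rfl
  obtain ⟨c, -, hslope⟩ := exists_hasDerivAt_eq_slope f (fun _ => 0) hx0
    (hc.mono (Icc_subset_Ico_right hx.2)) fun t ht => hd t ⟨ht.1, ht.2.trans hx.2⟩
  rw [eq_comm, div_eq_zero_iff, sub_eq_zero] at hslope
  exact hslope.resolve_right (by linarith)

theorem mul_lt_one_of_Vq_pos {β γ x y : ℝ} (hx : 0 < x) (hy : y < 0) (hVx : 0 < Vq β γ x)
    (hVy : 0 < Vq β γ y) : β * (x * y) < 1 := by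
  have key : (x - y) * (1 - β * (x * y)) = -y * Vq β γ x + x * Vq β γ y := by unfold Vq; ring
  nlinarith [mul_pos (neg_pos.2 hy) hVx, mul_pos hx hVy]

theorem exists_pos_integral_div_Vq_symm {β γ r : ℝ} (hr : 0 < r)
    (hV : ∀ u ∈ Icc (-r) r, 0 < Vq β γ u) :
    ∃ A > 0, ∫ u in -r..r, u / Vq β γ u = γ * A := by
  have hVc : Continuous (Vq β γ) := by unfold Vq; fun_prop
  have hV' : ∀ u ∈ Icc (-r) r, 0 < Vq β γ (-u) := fun u hu =>
    hV (-u) ⟨by linarith [hu.2], by linarith [hu.1]⟩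
  have hf : ContinuousOn (fun u => u / Vq β γ u) (Icc (-r) r) :=
    continuousOn_id.div hVc.continuousOn fun u hu => (hV u hu).ne'
  have hf' : ContinuousOn (fun u => -u / Vq β γ (-u)) (Icc (-r) r) :=
    continuousOn_neg.div (hVc.comp continuous_neg).continuousOn fun u hu => (hV' u hu).ne'
  have hg : ContinuousOn (fun u => u ^ 2 / (Vq β γ u * Vq β γ (-u))) (Icc (-r) r) :=
    (continuous_pow 2).continuousOn.div
      (hVc.continuousOn.mul (hVc.comp continuous_neg).continuousOn)
      fun u hu => (mul_pos (hV u hu) (hV' u hu)).ne'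
  have hr_mem : r ∈ Icc (-r) r := right_mem_Icc.2 (by linarith)
  refine ⟨∫ u in -r..r, u ^ 2 / (Vq β γ u * Vq β γ (-u)), ?_, ?_⟩
  · refine intervalIntegral.integral_pos (by linarith) hg (fun u hu => ?_) ⟨r, hr_mem, ?_⟩
    · have := mul_pos (hV u (Ioc_subset_Icc_self hu)) (hV' u (Ioc_subset_Icc_self hu))
      positivity
    · have := mul_pos (hV r hr_mem) (hV' r hr_mem)
      positivity
  have hrefl : ∫ u in -r..r, -u / Vq β γ (-u) = ∫ u in -r..r, u / Vq β γ u := by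
    simpa using intervalIntegral.integral_comp_neg (a := -r) (b := r) fun u => u / Vq β γ u
  have hodd : ∀ u ∈ uIcc (-r) r, u / Vq β γ u + -u / Vq β γ (-u) =
      2 * (γ * (u ^ 2 / (Vq β γ u * Vq β γ (-u)))) := by
    intro u hu
    rw [uIcc_of_le (by linarith)] at hu
    have := (hV u hu).ne'
    have := (hV' u hu).ne'
    field_simp
    unfold Vq
    ring
  have hsum := intervalIntegral.integral_add (hf.intervalIntegrable_of_Icc (μ := volume)
    (by linarith)) (hf'.intervalIntegrable_of_Icc (by linarith))
  rw [hrefl, intervalIntegral.integral_congr hodd, intervalIntegral.integral_const_mul,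
    intervalIntegral.integral_const_mul] at hsum
  linarith

/- Split off the symmetric part `[-r, r]`, `r = min x (-y)`, whose integral has the sign of `γ`;
the remaining part has the sign of `x + y`. -/
theorem halfMap_sign {β γ x y : ℝ} (hx : 0 < x) (hy : y < 0)
    (hV : ∀ u ∈ Icc y x, 0 < Vq β γ u) (hint : ∫ u in y..x, u / Vq β γ u = 0) :
    γ * (x + y) < 0 ∨ (γ = 0 ∧ x + y = 0) := by
  have hVc : Continuous (Vq β γ) := by unfold Vq; fun_prop
  have hf : ContinuousOn (fun u => u / Vq β γ u) (Icc y x) :=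
    continuousOn_id.div hVc.continuousOn fun u hu => (hV u hu).ne'
  have hsplit :
      ∀ a ∈ Icc y x, (∫ u in y..a, u / Vq β γ u) + ∫ u in a..x, u / Vq β γ u = 0 := by
    intro a ha
    rwa [intervalIntegral.integral_add_adjacent_intervals
      (hf.mono (uIcc_subset_Icc (left_mem_Icc.2 (hy.le.trans hx.le)) ha)).intervalIntegrable
      (hf.mono (uIcc_subset_Icc ha (right_mem_Icc.2 (hy.le.trans hx.le)))).intervalIntegrable]
  rcases lt_trichotomy (x + y) 0 with hs | hs | hs
  · obtain ⟨A, hA, hsymm⟩ := exists_pos_integral_div_Vq_symm hx fun u hu =>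
      hV u (Icc_subset_Icc (by linarith) le_rfl hu)
    have hleft : ∫ u in y..-x, u / Vq β γ u < 0 := by
      have := intervalIntegral.integral_lt_integral_of_continuousOn_of_le_of_exists_lt
        (a := y) (b := -x) (g := 0) (by linarith)
        (hf.mono (Icc_subset_Icc_right (by linarith))) continuousOn_const
        (fun u hu => div_nonpos_of_nonpos_of_nonneg (by linarith [hu.2])
          (hV u ⟨hu.1.le, by linarith [hu.2]⟩).le)
        ⟨y, left_mem_Icc.2 (by linarith),
          div_neg_of_neg_of_pos hy (hV y ⟨le_rfl, by linarith⟩)⟩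
      simpa using this
    have := hsplit (-x) ⟨by linarith, by linarith⟩
    left; nlinarith
  · obtain ⟨A, hA, hsymm⟩ := exists_pos_integral_div_Vq_symm hx fun u hu =>
      hV u (Icc_subset_Icc (by linarith) le_rfl hu)
    rw [show y = -x by linarith, hsymm] at hint
    exact Or.inr ⟨(mul_eq_zero.1 hint).resolve_right hA.ne', hs⟩
  · obtain ⟨A, hA, hsymm⟩ := exists_pos_integral_div_Vq_symm (neg_pos.2 hy) fun u hu =>
      hV u (Icc_subset_Icc (by linarith) (by linarith) hu)
    rw [neg_neg] at hsymm
    have hright : 0 < ∫ u in -y..x, u / Vq β γ u :=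
      intervalIntegral.integral_pos (by linarith) (hf.mono (Icc_subset_Icc_left (by linarith)))
        (fun u hu => div_nonneg (by linarith [hu.1]) (hV u ⟨by linarith [hu.1], hu.2⟩).le)
        ⟨x, right_mem_Icc.2 (by linarith), div_pos hx (hV x ⟨by linarith, le_rfl⟩)⟩
    have := hsplit (-y) ⟨by linarith, by linarith⟩
    left; nlinarith

theorem halfMap_deriv_relation {β γ b p x : ℝ} {P : ℝ → ℝ}
    (hint : ∀ x ∈ Ioo 0 b, ∫ u in (P x)..x, u / Vq β γ u = 0) (hx : x ∈ Ioo 0 b)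
    (hPx : P x ≤ x) (hV : ∀ u ∈ Icc (P x) x, Vq β γ u > 0) (hP : HasDerivAt P p x) :
    x * Vq β γ (P x) = p * (P x * Vq β γ x) := by
  have hd := hasDerivWithinAt_integral_id_div (by unfold Vq; fun_prop) hPx
    (fun u hu => (hV u hu).ne') hP.hasDerivWithinAt (s := univ)
  rw [hasDerivWithinAt_univ] at hd
  have h0 := hd.unique ((hasDerivAt_const x (0 : ℝ)).congr_of_eventuallyEq
    (eventually_of_mem (isOpen_Ioo.mem_nhds hx) hint))
  have := (hV x ⟨hPx, le_rfl⟩).ne'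
  have := (hV (P x) ⟨le_rfl, hPx⟩).ne'
  field_simp at h0
  linear_combination h0

def divFactor (β γ B α δ x y : ℝ) : ℝ :=
  β * ((B - δ) * (x + y) + α * (x * y)) - ((B - δ) * γ + α)

def crossingConst (β γ B α δ : ℝ) : ℝ :=
  β * (B - δ) ^ 2 + γ * (B - δ) * α + α ^ 2

theorem Vq_mul_Xsl_sub {β γ B α δ : ℝ} (hδ : 1 + δ ≠ 0) (x y : ℝ) :
    (1 + δ) * (Vq β γ x * Xsl B α δ y - Vq β γ y * Xsl B α δ x) =
      (x - y) * divFactor β γ B α δ x y := by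
  unfold Vq Xsl divFactor
  field_simp
  ring

theorem crossingConst_eq {β γ B α δ : ℝ} (hδ : 1 + δ ≠ 0) (x y : ℝ) :
    β * ((1 + δ) ^ 2 * (Xsl B α δ x * Xsl B α δ y)) - α * divFactor β γ B α δ x y =
      crossingConst β γ B α δ := by
  unfold Xsl divFactor crossingConst
  field_simp
  ring

theorem Itil_deriv_eq {β γ B α δ x y p : ℝ} (hδ : 0 < 1 + δ) (hVx : Vq β γ x ≠ 0)
    (hXx : Xsl B α δ x ≠ 0) (hXy : Xsl B α δ y ≠ 0)
    (hrel : x * Vq β γ y = p * (y * Vq β γ x)) :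
    x / Xsl B α δ x - p * (y / Xsl B α δ y) =
      x * (x - y) / ((1 + δ) * (Vq β γ x * Xsl B α δ x * Xsl B α δ y)) *
        divFactor β γ B α δ x y := by
  rw [div_mul_eq_mul_div, mul_assoc x, ← Vq_mul_Xsl_sub hδ.ne']
  field_simp
  linear_combination Xsl B α δ x * hrel

theorem exists_pos_hasDerivAt_Itil {β γ B α δ b p x : ℝ} {P : ℝ → ℝ} (hδ : 0 < 1 + δ)
    (hint : ∀ x ∈ Ioo 0 b, ∫ u in (P x)..x, u / Vq β γ u = 0) (hx : x ∈ Ioo 0 b)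
    (hPx : P x < 0) (hV : ∀ u ∈ Icc (P x) x, Vq β γ u > 0)
    (hX : ∀ u ∈ Icc (P x) x, Xsl B α δ u > 0)
    (hP : HasDerivAt P p x) :
    ∃ r > 0, HasDerivAt (Itil B α δ P) (r * divFactor β γ B α δ x (P x)) x := by
  have hPx' : P x ≤ x := by linarith [hx.1]
  have hVx := hV x ⟨hPx', le_rfl⟩
  have hXx := hX x ⟨hPx', le_rfl⟩
  have hXy := hX (P x) ⟨le_rfl, hPx'⟩
  refine ⟨x * (x - P x) / ((1 + δ) * (Vq β γ x * Xsl B α δ x * Xsl B α δ (P x))),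
    div_pos (mul_pos hx.1 (by linarith [hx.1])) (mul_pos hδ (mul_pos (mul_pos hVx hXx) hXy)), ?_⟩
  have hd := hasDerivWithinAt_integral_id_div (by unfold Xsl; fun_prop) hPx'
    (fun u hu => (hX u hu).ne') hP.hasDerivWithinAt (s := univ)
  rw [hasDerivWithinAt_univ, Itil_deriv_eq hδ hVx.ne' hXx.ne' hXy.ne'
    (halfMap_deriv_relation hint hx hPx' hV hP)] at hd
  exact hd

theorem continuousOn_Itil {B α δ b : ℝ} {P : ℝ → ℝ}
    (hdiff : DifferentiableOn ℝ P (Ico 0 b)) (hP0 : P 0 = 0) (hPneg : ∀ x ∈ Ioo 0 b, P x < 0)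
    (hXsl : ∀ x ∈ Ico 0 b, ∀ u ∈ Icc (P x) x, Xsl B α δ u > 0) :
    ContinuousOn (Itil B α δ P) (Ico 0 b) := by
  intro x hx
  have hPx : P x ≤ x := by
    rcases hx.1.eq_or_lt with rfl | hx0
    · exact hP0.le
    · exact (hPneg x ⟨hx0, hx.2⟩).le.trans hx0.le
  exact (hasDerivWithinAt_integral_id_div (by unfold Xsl; fun_prop) hPx
    (fun u hu => (hXsl x hx u hu).ne') (hdiff x hx).hasDerivWithinAt).continuousWithinAt

theorem hasDerivAt_divFactor {β γ B α δ p x : ℝ} {P : ℝ → ℝ} (hP : HasDerivAt P p x) :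
    HasDerivAt (fun t => divFactor β γ B α δ t (P t))
      (β * ((B - δ) * (1 + p) + α * (P x + x * p))) x := by
  have := (((((hasDerivAt_id x).add hP).const_mul (B - δ)).add
    (((hasDerivAt_id x).mul hP).const_mul α)).const_mul β).sub_const ((B - δ) * γ + α)
  simpa [divFactor] using this

theorem crossingConst_mul_pos {β γ B α δ x y p : ℝ} (hβ : β ≠ 0)
    (hαγ : (α, γ) ≠ (0, 0)) (hm : 0 < B - δ) (hδ : 0 < 1 + δ) (hx : 0 < x) (hy : y < 0)
    (hVx : 0 < Vq β γ x) (hVy : 0 < Vq β γ y) (hXx : 0 < Xsl B α δ x)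
    (hXy : 0 < Xsl B α δ y)
    (hsign : γ * (x + y) < 0 ∨ (γ = 0 ∧ x + y = 0))
    (hrel : x * Vq β γ y = p * (y * Vq β γ x)) (hG : divFactor β γ B α δ x y = 0) :
    0 < crossingConst β γ B α δ * γ * (β * ((B - δ) * (1 + p) + α * (y + x * p))) := by
  set Λ := crossingConst β γ B α δ with hΛdef
  set G' := β * ((B - δ) * (1 + p) + α * (y + x * p))
  have hxy := mul_lt_one_of_Vq_pos hx hy hVx hVy
  have hγ : γ * (x + y) < 0 := by
    refine hsign.resolve_right fun ⟨hγ, hs⟩ => hαγ ?_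
    have hα : α * (β * (x * y) - 1) = 0 := by
      unfold divFactor at hG
      linear_combination hG - β * (B - δ) * hs + (B - δ) * hγ
    rw [mul_eq_zero, sub_eq_zero] at hα
    simp [hα.resolve_right hxy.ne, hγ]
  have hΛ : Λ ≠ 0 := by
    rw [hΛdef, ← crossingConst_eq hδ.ne' x y, hG, mul_zero, sub_zero]
    exact mul_ne_zero hβ (mul_pos (pow_pos hδ 2) (mul_pos hXx hXy)).ne'
  have key : (B - δ) * G' * (y * Vq β γ x) = -(Λ * (β * (x * y) - 1) * (x + y)) := by
    unfold Vq at hrel ⊢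
    unfold divFactor at hG
    rw [hΛdef, crossingConst]
    linear_combination (-(B - δ) * β * (B - δ + α * x)) * hrel +
      (2 * (B - δ) * β * (x * y) + α * (x + y)) * hG
  have hneg : (B - δ) * (y * Vq β γ x) < 0 :=
    mul_neg_of_pos_of_neg hm (mul_neg_of_neg_of_pos hy hVx)
  refine pos_of_mul_neg_left ?_ hneg.le
  calc Λ * γ * G' * ((B - δ) * (y * Vq β γ x))
        = Λ * γ * ((B - δ) * G' * (y * Vq β γ x)) := by ring
    _ = -(Λ ^ 2 * ((γ * (x + y)) * (β * (x * y) - 1))) := by rw [key]; ring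
    _ < 0 := neg_neg_of_pos (mul_pos (by positivity) (mul_pos_of_neg_of_neg hγ (by linarith)))

theorem crossingConst_mul_deriv_divFactor_pos {β γ B α δ b x : ℝ} {P : ℝ → ℝ}
    (hyp : (β ≠ 0 ∧ (α, γ) ≠ ((0 : ℝ), (0 : ℝ))) ∨ (β = 0 ∧ α + γ * (B - δ) ≠ 0))
    (hm : 0 < B - δ) (hδ : 0 < 1 + δ)
    (hint : ∀ x ∈ Ioo 0 b, ∫ u in (P x)..x, u / Vq β γ u = 0)
    (hx : x ∈ Ioo 0 b) (hPx : P x < 0) (hV : ∀ u ∈ Icc (P x) x, Vq β γ u > 0)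
    (hX : ∀ u ∈ Icc (P x) x, Xsl B α δ u > 0) (hP : DifferentiableAt ℝ P x)
    (hG : divFactor β γ B α δ x (P x) = 0) :
    0 < crossingConst β γ B α δ * γ * deriv (fun t => divFactor β γ B α δ t (P t)) x := by
  have hPx' : P x ≤ x := by linarith [hx.1]
  rcases hyp with ⟨hβ, hαγ⟩ | ⟨hβ, hne⟩
  · rw [(hasDerivAt_divFactor hP.hasDerivAt).deriv]
    exact crossingConst_mul_pos hβ hαγ hm hδ hx.1 hPx (hV x ⟨hPx', le_rfl⟩)
      (hV _ ⟨le_rfl, hPx'⟩) (hX x ⟨hPx', le_rfl⟩) (hX _ ⟨le_rfl, hPx'⟩)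
      (halfMap_sign hx.1 hPx hV (hint x hx))
      (halfMap_deriv_relation hint hx hPx' hV hP.hasDerivAt) hG
  · simp only [divFactor, hβ, zero_mul, zero_sub, neg_eq_zero] at hG
    exact absurd (by linarith) hne

theorem divFactor_eq_zero_of_degenerate {β γ B α δ b x : ℝ} {P : ℝ → ℝ}
    (hyp : (α, γ) = ((0 : ℝ), (0 : ℝ)) ∨ (β = 0 ∧ α + γ * (B - δ) = 0))
    (hint : ∀ x ∈ Ioo 0 b, ∫ u in (P x)..x, u / Vq β γ u = 0) (hx : x ∈ Ioo 0 b)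
    (hPx : P x < 0) (hV : ∀ u ∈ Icc (P x) x, Vq β γ u > 0) :
    divFactor β γ B α δ x (P x) = 0 := by
  rcases hyp with h | ⟨hβ, h⟩
  · obtain ⟨rfl, rfl⟩ := Prod.mk.inj h
    have hs : x + P x = 0 := by simpa using halfMap_sign hx.1 hPx hV (hint x hx)
    simp [divFactor, hs]
  · simp only [divFactor, hβ]
    linarith

theorem slow_divergence_integral_main_general (β γ b B α δ : ℝ)
    (hBδ : B > δ) (hδ : δ > 0) (P : ℝ → ℝ)
    (hdiff : DifferentiableOn ℝ P (Set.Ico 0 b))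
    (hP0 : P 0 = 0)
    (hPneg : ∀ x ∈ Set.Ioo 0 b, P x < 0)
    (hV : ∀ x ∈ Set.Ioo 0 b, ∀ u ∈ Set.Icc (P x) x, Vq β γ u > 0)
    (hint : ∀ x ∈ Set.Ioo 0 b, ∫ u in (P x)..x, u / Vq β γ u = 0)
    (hXsl : ∀ x ∈ Set.Ico 0 b, ∀ u ∈ Set.Icc (P x) x, Xsl B α δ u > 0) :
    (((β ≠ 0 ∧ (α, γ) ≠ ((0 : ℝ), (0 : ℝ))) ∨ (β = 0 ∧ α + γ * (B - δ) ≠ 0)) →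
      ∀ x₀ ∈ Set.Ioo 0 b, Itil B α δ P x₀ = 0 →
        deriv (Itil B α δ P) x₀ ≠ 0 ∧
        ∀ x₁ ∈ Set.Ioo 0 b, Itil B α δ P x₁ = 0 → x₁ = x₀) ∧
    (((α, γ) = ((0 : ℝ), (0 : ℝ)) ∨ (β = 0 ∧ α + γ * (B - δ) = 0)) →
      ∀ x ∈ Set.Ico 0 b, Itil B α δ P x = 0) := by
  have hm : 0 < B - δ := by linarith
  have hδ1 : 0 < 1 + δ := by linarith
  have hPd : ∀ x ∈ Ioo 0 b, DifferentiableAt ℝ P x := fun x hx =>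
    (hdiff x (Ioo_subset_Ico_self hx)).differentiableAt (Ico_mem_nhds hx.1 hx.2)
  have hIc := continuousOn_Itil hdiff hP0 hPneg hXsl
  have hI0 : Itil B α δ P 0 = 0 := by simp [Itil, hP0]
  have hI : ∀ x ∈ Ioo 0 b, ∃ r > 0,
      HasDerivAt (Itil B α δ P) (r * divFactor β γ B α δ x (P x)) x := fun x hx =>
    exists_pos_hasDerivAt_Itil hδ1 hint hx (hPneg x hx) (hV x hx)
      (hXsl x (Ioo_subset_Ico_self hx)) (hPd x hx).hasDerivAt
  have hGc : ContinuousOn (fun t => divFactor β γ B α δ t (P t)) (Ioo 0 b) := fun x hx =>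
    (hasDerivAt_divFactor (hPd x hx).hasDerivAt).continuousAt.continuousWithinAt
  refine ⟨fun hyp x₀ hx₀ hIx₀ => deriv_ne_zero_and_unique_of_hasDerivAt_mul hI0 hIc hI hGc
    (fun z hz hGz => crossingConst_mul_deriv_divFactor_pos hyp hm hδ1 hint hz (hPneg z hz)
      (hV z hz) (hXsl z (Ioo_subset_Ico_self hz)) (hPd z hz) hGz) hx₀ hIx₀,
    fun hyp x hx => ?_⟩
  refine (eq_left_of_hasDerivAt_zero hIc (fun t ht => ?_) x hx).trans hI0
  obtain ⟨r, -, hd⟩ := hI t ht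
  simpa [divFactor_eq_zero_of_degenerate hyp hint ht (hPneg t ht) (hV t ht)] using hd

/-- Main result (Theorem 2.5): (i) if `β ≠ 0` and `(α,γ) ≠ (0,0)`, or `β = 0` and
`α + γ(B−δ) ≠ 0`, then the slow divergence integral `Ĩ` has at most one zero in
`(0,b)`, and every such zero is simple; (ii) otherwise `Ĩ ≡ 0` on `[0,b)`. -/
theorem slow_divergence_integral_main (β γ b B α δ : ℝ)
    (hb : 0 < b) (hBδ : B > δ) (hδ : δ > 0) (P : ℝ → ℝ)
    (hdiff : DifferentiableOn ℝ P (Set.Ico 0 b))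
    (hP0 : P 0 = 0)
    (hPneg : ∀ x ∈ Set.Ioo 0 b, P x < 0)
    (hV : ∀ x ∈ Set.Ioo 0 b, ∀ u ∈ Set.Icc (P x) x, Vq β γ u > 0)
    (hint : ∀ x ∈ Set.Ioo 0 b, ∫ u in (P x)..x, u / Vq β γ u = 0)
    (hXsl : ∀ x ∈ Set.Ico 0 b, ∀ u ∈ Set.Icc (P x) x, Xsl B α δ u > 0) :
    (((β ≠ 0 ∧ (α, γ) ≠ ((0 : ℝ), (0 : ℝ))) ∨ (β = 0 ∧ α + γ * (B - δ) ≠ 0)) →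
      ∀ x₀ ∈ Set.Ioo 0 b, Itil B α δ P x₀ = 0 →
        deriv (Itil B α δ P) x₀ ≠ 0 ∧
        ∀ x₁ ∈ Set.Ioo 0 b, Itil B α δ P x₁ = 0 → x₁ = x₀) ∧
    (((α, γ) = ((0 : ℝ), (0 : ℝ)) ∨ (β = 0 ∧ α + γ * (B - δ) = 0)) →
      ∀ x ∈ Set.Ico 0 b, Itil B α δ P x = 0) :=
  slow_divergence_integral_main_general β γ b B α δ hBδ hδ P hdiff hP0 hPneg hV hint hXsl
end
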